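/- Let (R, 𝔪) be a local commutative artinian principal ideal ring, M a finitely generated R-module, N an R-module isomorphic to R, and ⟨,⟩ : M × M → N a symmetric R-bilinear form. Let L ⊆ M be a submodule with L ⊆ L^⊥. Then every submodule L' which is maximal among submodules of M containing L and satisfying L' ⊆ L'^⊥ also satisfies 𝔪 L'^⊥ ⊆ L'. -/
import Mathlib


/-- The orthogonal complement of a submodule with respect to a bilinear form. -/
def orth {R M N : Type*} [CommRing R] [AddCommGroup M] [Module R M]
    [AddCommGroup N] [Module R N] (B : M →ₗ[R] M →ₗ[R] N) (L : Submodule R M) :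
    Submodule R M where
  carrier := {x | ∀ l ∈ L, B x l = 0}
  add_mem' := by
    intro a b ha hb l hl
    simp [ha l hl, hb l hl]
  zero_mem' := by intro l hl; simp
  smul_mem' := by
    intro c a ha l hl
    simp [ha l hl]

/-- Let `(R, 𝔪)` be a local commutative artinian principal ideal ring, `M` a finitely
generated `R`-module, `N ≅ R`, and `⟨,⟩ : M × M → N` a symmetric bilinear form.  Let
`L ⊆ M` be a submodule with `L ⊆ L^⊥`.  Then every submodule `L'` maximal among submodules
containing `L` and satisfying `L' ⊆ L'^⊥` also satisfies `𝔪 L'^⊥ ⊆ L'`. -/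
theorem maximal_isotropic_submodule (R M N : Type*) [CommRing R] [IsLocalRing R]
    [IsArtinianRing R] [IsPrincipalIdealRing R] [AddCommGroup M] [Module R M]
    [Module.Finite R M] [AddCommGroup N] [Module R N] (e : N ≃ₗ[R] R)
    (B : M →ₗ[R] M →ₗ[R] N) (hB : ∀ x y, B x y = B y x)
    (L L' : Submodule R M) (hL : L ≤ orth B L)
    (hLL' : L ≤ L') (hL' : L' ≤ orth B L')
    (hmax : ∀ L'' : Submodule R M, L ≤ L'' → L'' ≤ orth B L'' → L' ≤ L'' → L'' = L') :
    IsLocalRing.maximalIdeal R • orth B L' ≤ L' := by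
  classical
  obtain ⟨π, hπ⟩ := (IsPrincipalIdealRing.principal (IsLocalRing.maximalIdeal R)).principal
  have hπmem : π ∈ IsLocalRing.maximalIdeal R := by
    rw [hπ]; exact Submodule.mem_span_singleton_self π
  have hnil : ∃ k, π ^ k = 0 := by
    obtain ⟨k, hk⟩ := IsArtinianRing.isNilpotent_jacobson_bot (R := R)
    rw [IsLocalRing.jacobson_eq_maximalIdeal (⊥ : Ideal R) bot_ne_top] at hk
    refine ⟨k, ?_⟩
    have : π ^ k ∈ (IsLocalRing.maximalIdeal R) ^ k := Ideal.pow_mem_pow hπmem k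
    rw [hk] at this
    simpa using this
  have key : ∀ x ∈ orth B L', π • x ∈ L' := by
    intro x hx
    obtain ⟨k, hk⟩ := hnil
    have main : ∀ a, π ^ a • x ∈ L' → π • x ∈ L' := by
      intro a
      induction a with
      | zero =>
        intro h
        exact Submodule.smul_mem L' π (by simpa using h)
      | succ n ih =>
        intro h
        rcases Nat.eq_zero_or_pos n with hn | hn
        · subst hn; simpa using h
        apply ih
        set y := π ^ n • x with hy
        have hyorth : y ∈ orth B L' := Submodule.smul_mem _ _ hx
        have htzero : π ^ (n + 1) • (B x x) = 0 := by
          have := hx (π ^ (n + 1) • x) h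
          simpa using this
        have hByy : B y y = 0 := by
          have h1 : B y y = (π ^ n * π ^ n) • B x x := by
            simp [hy, smul_smul]
          rw [h1, ← pow_add]
          have h2 : n + n = (n - 1) + (n + 1) := by omega
          rw [h2, pow_add, mul_smul, htzero, smul_zero]
        have hiso : (L' ⊔ Submodule.span R {y}) ≤ orth B (L' ⊔ Submodule.span R {y}) := by
          intro z hz w hw
          rw [Submodule.mem_sup] at hz hw
          obtain ⟨l1, hl1, z1, hz1, rfl⟩ := hz
          obtain ⟨l2, hl2, z2, hz2, rfl⟩ := hw
          rw [Submodule.mem_span_singleton] at hz1 hz2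
          obtain ⟨s1, rfl⟩ := hz1
          obtain ⟨s2, rfl⟩ := hz2
          have e1 : B l1 l2 = 0 := hL' hl1 l2 hl2
          have e2 : B y l1 = 0 := hyorth l1 hl1
          have e3 : B l1 y = 0 := (hB l1 y).trans e2
          have e4 : B y l2 = 0 := hyorth l2 hl2
          simp [map_add, map_smul, e1, e3, e4, hByy]
        have heq := hmax (L' ⊔ Submodule.span R {y}) (hLL'.trans le_sup_left) hiso le_sup_left
        have : y ∈ L' ⊔ Submodule.span R {y} :=
          Submodule.mem_sup_right (Submodule.mem_span_singleton_self y)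
        rwa [heq] at this
    exact main k (by simp [hk])
  rw [Submodule.smul_le]
  intro r hr x hx
  rw [hπ, Submodule.mem_span_singleton] at hr
  obtain ⟨c, rfl⟩ := hr
  rw [smul_eq_mul, mul_smul]
  exact Submodule.smul_mem _ _ (key x hx)
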